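/- In a rectangular grid graph R(m,n) there is a cycle of length k (i.e., with exactly k vertices) if and only if m > 1, n > 1, k is even, and 4 ≤ k ≤ m·n. -/

import Mathlib

/-- Adjacency in the infinite 2D integer grid graph `G∞`:
two lattice points are adjacent iff they are at (Euclidean) distance 1. -/
def GridAdj (u v : ℤ × ℤ) : Prop :=
  (u.1 - v.1).natAbs + (u.2 - v.2).natAbs = 1

/-- The infinite grid graph `G∞` as a simple graph on `ℤ × ℤ`. -/
def GridGraph : SimpleGraph (ℤ × ℤ) where
  Adj u v := GridAdj u v
  symm := ⟨fun u v h => by simp only [GridAdj] at *; omega⟩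
  loopless := ⟨fun u h => by simp only [GridAdj] at h; omega⟩

/-- A grid graph with vertex set `V` is solid if the subgraph of `G∞`
induced by the complement of `V` is connected. -/
def Solid (V : Set (ℤ × ℤ)) : Prop :=
  (GridGraph.induce Vᶜ).Connected

/-- Vertex set of the rectangular grid graph `R(m,n)`. -/
def RectV (m n : ℤ) : Set (ℤ × ℤ) :=
  {v | 1 ≤ v.1 ∧ v.1 ≤ m ∧ 1 ≤ v.2 ∧ v.2 ≤ n}

/-- `l` is a path from `s` to `t` in the grid graph induced by the vertex set `V`,
recorded as the list of its vertices. -/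
def IsGridPath (V : Set (ℤ × ℤ)) (l : List (ℤ × ℤ)) (s t : ℤ × ℤ) : Prop :=
  l ≠ [] ∧ (∀ v ∈ l, v ∈ V) ∧ l.Nodup ∧ l.Chain' GridAdj ∧
    l.head? = some s ∧ l.getLast? = some t

/-- `l` is a cycle in the grid graph induced by the vertex set `V`, recorded as the
list of its (distinct) vertices; consecutive vertices, and the last and first
vertices, are adjacent.  Its length (number of vertices) is `l.length`. -/
def IsGridCycle (V : Set (ℤ × ℤ)) (l : List (ℤ × ℤ)) : Prop :=
  3 ≤ l.length ∧ (∀ v ∈ l, v ∈ V) ∧ l.Nodup ∧ (l ++ l.take 1).Chain' GridAdj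

/-- The sequence of unit steps of a path (as a list of vertices). -/
def pathSteps (l : List (ℤ × ℤ)) : List (ℤ × ℤ) :=
  (l.zip l.tail).map fun p => p.2 - p.1

/-- A path is monotone if it contains no two steps in opposite directions. -/
def MonotonePath (l : List (ℤ × ℤ)) : Prop :=
  ∀ d₁ ∈ pathSteps l, ∀ d₂ ∈ pathSteps l, d₁ ≠ -d₂

/-- The first and the last step of the (sub)path `c` point in opposite directions. -/
def OppEnds (c : List (ℤ × ℤ)) : Prop :=
  3 ≤ c.length ∧
    c.getD 1 (0, 0) - c.getD 0 (0, 0) =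
      c.getD (c.length - 2) (0, 0) - c.getD (c.length - 1) (0, 0)

/-- A cave: a (contiguous) subpath whose first and last steps point in opposite
directions, which is minimal with this property. -/
def IsCave (c : List (ℤ × ℤ)) : Prop :=
  OppEnds c ∧ ∀ c', c' <:+: c → c'.length < c.length → ¬ OppEnds c'

/-- The first endpoint `p` of a cave. -/
def caveStart (c : List (ℤ × ℤ)) : ℤ × ℤ := c.getD 0 (0, 0)

/-- The second endpoint `q` of a cave. -/
def caveEnd (c : List (ℤ × ℤ)) : ℤ × ℤ := c.getD (c.length - 1) (0, 0)

/-- `v` is a lattice point strictly between `p` and `q` on the straight axis-parallel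
segment from `p` to `q` (the "vertices inside" a cave with endpoints `p`, `q`). -/
def Between (p q v : ℤ × ℤ) : Prop :=
  (p.1 = q.1 ∧ v.1 = p.1 ∧ min p.2 q.2 < v.2 ∧ v.2 < max p.2 q.2) ∨
  (p.2 = q.2 ∧ v.2 = p.2 ∧ min p.1 q.1 < v.1 ∧ v.1 < max p.1 q.1)

/-- `v` is a lattice point on the closed straight segment from `p` to `q`. -/
def OnSeg (p q v : ℤ × ℤ) : Prop := v = p ∨ v = q ∨ Between p q v

/-- The (directed) edges of a cycle given by its vertex list `l`,
including the closing edge from the last vertex back to the first. -/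
def cycEdges (l : List (ℤ × ℤ)) : List ((ℤ × ℤ) × (ℤ × ℤ)) :=
  (l ++ l.take 1).zip (l ++ l.take 1).tail

/-- The (undirected) edge `{a, b}` occurs on the cycle `l`. -/
def CycEdgeMem (l : List (ℤ × ℤ)) (a b : ℤ × ℤ) : Prop :=
  (a, b) ∈ cycEdges l ∨ (b, a) ∈ cycEdges l

/-- The (directed) edges of a path given by its vertex list `l`. -/
def pathEdges (l : List (ℤ × ℤ)) : List ((ℤ × ℤ) × (ℤ × ℤ)) := l.zip l.tail

/-- The (undirected) edge `{a, b}` occurs on the path `l`. -/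
def PathEdgeMem (l : List (ℤ × ℤ)) (a b : ℤ × ℤ) : Prop :=
  (a, b) ∈ pathEdges l ∨ (b, a) ∈ pathEdges l

/-- Number of vertical edges of the cycle `l` crossed by the rightward horizontal ray
starting at the point `(a, b + 1/2)`: vertical edges joining `(x,b)` and `(x,b+1)`
with `x > a`.  Used for the even–odd ("inside") test. -/
def vertCross (l : List (ℤ × ℤ)) (a b : ℤ) : ℕ :=
  (cycEdges l).countP fun e =>
    decide (e.1.1 = e.2.1 ∧ a < e.1.1 ∧
      ((e.1.2 = b ∧ e.2.2 = b + 1) ∨ (e.1.2 = b + 1 ∧ e.2.2 = b)))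

/-- Number of horizontal edges of the cycle `l` crossed by the upward vertical ray
starting at the point `(a + 1/2, b)`: horizontal edges joining `(a,y)` and `(a+1,y)`
with `y > b`. -/
def horizCross (l : List (ℤ × ℤ)) (a b : ℤ) : ℕ :=
  (cycEdges l).countP fun e =>
    decide (e.1.2 = e.2.2 ∧ b < e.1.2 ∧
      ((e.1.1 = a ∧ e.2.1 = a + 1) ∨ (e.1.1 = a + 1 ∧ e.2.1 = a)))

/-- The lattice point `v` lies in the closed bounded region determined by the cycle `l`
(regarded as a simple closed curve): either on the curve, or inside it by the
even–odd rule. -/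
def InClosedRegion (l : List (ℤ × ℤ)) (v : ℤ × ℤ) : Prop :=
  v ∈ l ∨ Odd (vertCross l v.1 v.2)

/-- The unit grid edge `{u, v}` lies in the closed bounded region determined by the
cycle `l`: either it is an edge of the cycle, or its midpoint is inside the cycle by
the even–odd rule. -/
def EdgeInClosedRegion (l : List (ℤ × ℤ)) (u v : ℤ × ℤ) : Prop :=
  CycEdgeMem l u v ∨
    (u.1 = v.1 ∧ Odd (vertCross l u.1 (min u.2 v.2))) ∨
    (u.2 = v.2 ∧ Odd (horizCross l (min u.1 v.1) u.2))

/-- The cave `c` of the cycle `l` is convex: the vertices and edges inside it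
(i.e. on the straight segment between its endpoints) lie in the closed bounded
region determined by `l`. -/
def ConvexCave (l c : List (ℤ × ℤ)) : Prop :=
  (∀ v, Between (caveStart c) (caveEnd c) v → InClosedRegion l v) ∧
  (∀ u v, OnSeg (caveStart c) (caveEnd c) u → OnSeg (caveStart c) (caveEnd c) v →
    GridAdj u v → EdgeInClosedRegion l u v)

/-- `c` is a cave of the cycle `l`: a cave that occurs as a contiguous subpath of the
cyclic vertex sequence of `l` (i.e. as a prefix of some rotation of `l`). -/
def CaveOfCycle (l c : List (ℤ × ℤ)) : Prop :=
  IsCave c ∧ ∃ i, c <+: l.rotate i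

/-- The cave `c` is contractible with respect to the path/cycle `l`:
no vertex inside the cave belongs to `l`. -/
def ContractibleCaveOf (l c : List (ℤ × ℤ)) : Prop :=
  ∀ v, Between (caveStart c) (caveEnd c) v → v ∉ l

/-- The straight axis-parallel segment from `p` to `q`, as the list of its lattice
points from `p` to `q` (the shortest path between `p` and `q` on their common line). -/
def segList (p q : ℤ × ℤ) : List (ℤ × ℤ) :=
  if p.1 = q.1 then
    (List.range ((q.2 - p.2).natAbs + 1)).map fun i =>
      (p.1, p.2 + (if p.2 ≤ q.2 then (i : ℤ) else -(i : ℤ)))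
  else
    (List.range ((q.1 - p.1).natAbs + 1)).map fun i =>
      (p.1 + (if p.1 ≤ q.1 then (i : ℤ) else -(i : ℤ)), p.2)

/-- Adjacency in the infinite 3D integer grid: distance 1. -/
def Grid3Adj (u v : ℤ × ℤ × ℤ) : Prop :=
  (u.1 - v.1).natAbs + (u.2.1 - v.2.1).natAbs + (u.2.2 - v.2.2).natAbs = 1

/-- Vertex set of the 3D grid graph `R(m,n,o)`. -/
def Rect3V (m n o : ℤ) : Set (ℤ × ℤ × ℤ) :=
  {v | 1 ≤ v.1 ∧ v.1 ≤ m ∧ 1 ≤ v.2.1 ∧ v.2.1 ≤ n ∧ 1 ≤ v.2.2 ∧ v.2.2 ≤ o}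

/-- `l` is a path from `s` to `t` in the 3D grid graph induced by `V`. -/
def IsGrid3Path (V : Set (ℤ × ℤ × ℤ)) (l : List (ℤ × ℤ × ℤ)) (s t : ℤ × ℤ × ℤ) : Prop :=
  l ≠ [] ∧ (∀ v ∈ l, v ∈ V) ∧ l.Nodup ∧ l.Chain' Grid3Adj ∧
    l.head? = some s ∧ l.getLast? = some t

/-- `l` is a cycle in the 3D grid graph induced by `V`. -/
def IsGrid3Cycle (V : Set (ℤ × ℤ × ℤ)) (l : List (ℤ × ℤ × ℤ)) : Prop :=
  3 ≤ l.length ∧ (∀ v ∈ l, v ∈ V) ∧ l.Nodup ∧ (l ++ l.take 1).Chain' Grid3Adj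

/-- The folding map `F` from the 3D grid `R(m,n,o)` to the rectangular grid `R(m,no)`:
`F(v) = (x(v), n(z(v)-1) + y(v))` if `z(v)` is odd, and
`F(v) = (x(v), n·z(v) - y(v) + 1)` if `z(v)` is even. -/
def foldMap (n : ℤ) (v : ℤ × ℤ × ℤ) : ℤ × ℤ :=
  if Odd v.2.2 then (v.1, n * (v.2.2 - 1) + v.2.1) else (v.1, n * v.2.2 - v.2.1 + 1)

/-!
Necessity. The parity of `x + y` alternates along grid edges, so cycles have even length. A
highest (resp. rightmost) vertex of a cycle has two distinct neighbours on the cycle, and they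
cannot both lie directly below it (resp. to its left); so no cycle lies in one column or one row.
Finally the vertices of a cycle are distinct points of the `m × n` rectangle.

Sufficiency. For `r ≥ 2`, a cycle with `2r` vertices runs along the bottom row from `(1, 1)` to
`(2p + 1, 1)`, up column `2p + 2` to some row `h`, down column `2p + 1`, and back to `(1, 2)`
through a comb of `p` teeth, each a pair of neighbouring columns rising from row `2` to an
adjustable height. When `m` is odd, column `2p + 2` may wiggle into the last column in pairs of
rows. Taking `2p + 2` as large as `r` and `m` allow, then raising `h`, then the teeth, then adding
wiggles, reaches every `r` with `2r ≤ mn`.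
-/

open Set

theorem GridAdj.symm {u v : ℤ × ℤ} (h : GridAdj u v) : GridAdj v u := by
  unfold GridAdj at *; omega

section Paths

variable {V W : Set (ℤ × ℤ)} {l l₁ l₂ : List (ℤ × ℤ)} {a b c d : ℤ × ℤ}

theorem IsGridPath.mono (h : IsGridPath V l a b) (hVW : V ⊆ W) : IsGridPath W l a b :=
  ⟨h.1, fun v hv => hVW (h.2.1 v hv), h.2.2⟩

theorem IsGridPath.append (h₁ : IsGridPath V l₁ a b) (h₂ : IsGridPath W l₂ c d)
    (hbc : GridAdj b c) (hVW : Disjoint V W) : IsGridPath (V ∪ W) (l₁ ++ l₂) a d := by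
  obtain ⟨hne₁, hV₁, hnd₁, hch₁, hhd₁, hlast₁⟩ := h₁
  obtain ⟨hne₂, hV₂, hnd₂, hch₂, hhd₂, hlast₂⟩ := h₂
  refine ⟨by simp [hne₁], fun v hv => ?_, ?_, ?_, ?_, ?_⟩
  · rcases List.mem_append.1 hv with hv | hv
    exacts [Or.inl (hV₁ v hv), Or.inr (hV₂ v hv)]
  · exact List.nodup_append.2 ⟨hnd₁, hnd₂, fun u hu v hv huv =>
      Set.disjoint_left.1 hVW (hV₁ u hu) (huv ▸ hV₂ v hv)⟩
  · refine hch₁.append hch₂ fun x hx y hy => ?_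
    rw [hlast₁, Option.mem_some_iff] at hx
    rw [hhd₂, Option.mem_some_iff] at hy
    exact hx ▸ hy ▸ hbc
  · rw [List.head?_append, hhd₁, Option.some_or]
  · rw [List.getLast?_append, hlast₂, Option.some_or]

theorem IsGridPath.reverse (h : IsGridPath V l a b) : IsGridPath V l.reverse b a := by
  obtain ⟨hne, hV, hnd, hch, hhd, hlast⟩ := h
  refine ⟨by simpa using hne, fun v hv => hV v (List.mem_reverse.1 hv), List.nodup_reverse.2 hnd,
    List.isChain_reverse.2 (hch.imp fun u v huv => huv.symm), ?_, ?_⟩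
  · rwa [List.head?_reverse]
  · rwa [List.getLast?_reverse]

theorem IsGridPath.isGridCycle (h : IsGridPath V l a b) (hba : GridAdj b a) (hl : 3 ≤ l.length) :
    IsGridCycle V l := by
  obtain ⟨hne, hV, hnd, hch, hhd, hlast⟩ := h
  refine ⟨hl, hV, hnd, ?_⟩
  obtain ⟨a', l', rfl⟩ := List.exists_cons_of_ne_nil hne
  obtain rfl : a' = a := by simpa using hhd
  refine hch.append (List.isChain_singleton _) fun x hx y hy => ?_
  rw [hlast, Option.mem_some_iff] at hx
  simp only [List.take_succ_cons, List.take_zero, List.head?_cons, Option.mem_some_iff] at hy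
  exact hx ▸ hy ▸ hba

theorem IsGridCycle.mono (h : IsGridCycle V l) (hVW : V ⊆ W) : IsGridCycle W l :=
  ⟨h.1, fun v hv => hVW (h.2.1 v hv), h.2.2⟩

end Paths

section Necessity

variable {V : Set (ℤ × ℤ)} {l : List (ℤ × ℤ)}

theorem IsGridCycle.adj_getElem (h : IsGridCycle V l) {i j : ℕ} (hi : i < l.length)
    (hj : j < l.length) (hij : j = i + 1 ∨ i + 1 = l.length ∧ j = 0) : GridAdj l[i] l[j] := by
  have hL : (l ++ l.take 1).length = l.length + 1 := by simp; omega
  have := List.isChain_iff_getElem.1 h.2.2.2 i (by omega)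
  rwa [List.getElem_append_left hi, show (l ++ l.take 1)[i + 1] = l[j] by
    rcases hij with rfl | ⟨hi', rfl⟩
    · exact List.getElem_append_left hj
    · rw [List.getElem_append_right (by omega)]; simp [hi']] at this

theorem IsGridCycle.parity_getElem (h : IsGridCycle V l) {i : ℕ} (hi : i < l.length) :
    (l[i].1 + l[i].2 + i - (l[0].1 + l[0].2)) % 2 = 0 := by
  induction i with
  | zero => simp
  | succ i ih =>
    have := h.adj_getElem (i := i) (j := i + 1) (by omega) hi (Or.inl rfl)
    have := ih (by omega)
    unfold GridAdj at *
    push_cast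
    omega

theorem IsGridCycle.even_length (h : IsGridCycle V l) : Even l.length := by
  have h3 := h.1
  have hlast := h.parity_getElem (i := l.length - 1) (by omega)
  have := h.adj_getElem (i := l.length - 1) (j := 0) (by omega) (by omega) (Or.inr ⟨by omega, rfl⟩)
  unfold GridAdj at this
  rw [Nat.even_iff]
  push_cast [Nat.cast_sub (by omega : 1 ≤ l.length)] at hlast
  omega

theorem IsGridCycle.exists_two_adj (h : IsGridCycle V l) {v : ℤ × ℤ} (hv : v ∈ l) :
    ∃ u ∈ l, ∃ w ∈ l, u ≠ w ∧ GridAdj v u ∧ GridAdj w v := by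
  have h3 := h.1
  obtain ⟨i, hi, rfl⟩ := List.getElem_of_mem hv
  obtain ⟨j, hj, hij⟩ : ∃ j, ∃ hj : j < l.length, j = i + 1 ∨ i + 1 = l.length ∧ j = 0 := by
    by_cases hi' : i + 1 < l.length
    exacts [⟨i + 1, hi', Or.inl rfl⟩, ⟨0, by omega, Or.inr ⟨by omega, rfl⟩⟩]
  obtain ⟨k, hk, hki⟩ : ∃ k, ∃ hk : k < l.length, i = k + 1 ∨ k + 1 = l.length ∧ i = 0 := by
    by_cases hi' : i = 0
    exacts [⟨l.length - 1, by omega, Or.inr ⟨by omega, hi'⟩⟩, ⟨i - 1, by omega, Or.inl (by omega)⟩]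
  refine ⟨l[j], List.getElem_mem hj, l[k], List.getElem_mem hk, fun hjk => ?_,
    h.adj_getElem hi hj hij, h.adj_getElem hk hi hki⟩
  have := h.2.2.1.getElem_inj_iff.1 hjk
  omega

theorem IsGridCycle.not_forall_fst_eq (h : IsGridCycle V l) (c : ℤ) : ¬ ∀ v ∈ l, v.1 = c := by
  intro hc
  obtain ⟨v, hv, hmax⟩ :=
    l.toFinset.exists_max_image Prod.snd ⟨l[0]'(by have := h.1; omega), by simp⟩
  rw [List.mem_toFinset] at hv
  obtain ⟨u, hu, w, hw, huw, hvu, hwv⟩ := h.exists_two_adj hv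
  have := hmax u (List.mem_toFinset.2 hu)
  have := hmax w (List.mem_toFinset.2 hw)
  have := hc u hu; have := hc v hv; have := hc w hw
  unfold GridAdj at hvu hwv
  exact huw (Prod.ext (by omega) (by omega))

theorem IsGridCycle.not_forall_snd_eq (h : IsGridCycle V l) (c : ℤ) : ¬ ∀ v ∈ l, v.2 = c := by
  intro hc
  obtain ⟨v, hv, hmax⟩ :=
    l.toFinset.exists_max_image Prod.fst ⟨l[0]'(by have := h.1; omega), by simp⟩
  rw [List.mem_toFinset] at hv
  obtain ⟨u, hu, w, hw, huw, hvu, hwv⟩ := h.exists_two_adj hv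
  have := hmax u (List.mem_toFinset.2 hu)
  have := hmax w (List.mem_toFinset.2 hw)
  have := hc u hu; have := hc v hv; have := hc w hw
  unfold GridAdj at hvu hwv
  exact huw (Prod.ext (by omega) (by omega))

theorem IsGridCycle.length_le_rectV {m n : ℤ} (h : IsGridCycle (RectV m n) l) :
    (l.length : ℤ) ≤ m * n := by
  have hsub : l.toFinset ⊆ Finset.Icc 1 m ×ˢ Finset.Icc 1 n := fun v hv => by
    have : v ∈ RectV m n := h.2.1 v (List.mem_toFinset.1 hv)
    simp only [Finset.mem_product, Finset.mem_Icc]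
    exact ⟨⟨this.1, this.2.1⟩, this.2.2⟩
  have hcard := Finset.card_le_card hsub
  rw [List.toFinset_card_of_nodup h.2.2.1, Finset.card_product, Int.card_Icc, Int.card_Icc,
    add_sub_cancel_right, add_sub_cancel_right] at hcard
  have hl : 0 < l.length := by have := h.1; omega
  have h₀ : l[0] ∈ RectV m n := h.2.1 _ (List.getElem_mem hl)
  have : ((l.length : ℕ) : ℤ) ≤ (m.toNat * n.toNat : ℕ) := by exact_mod_cast hcard
  rwa [Nat.cast_mul, Int.toNat_of_nonneg (by have := h₀.1; have := h₀.2.1; omega),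
    Int.toNat_of_nonneg (by have := h₀.2.2.1; have := h₀.2.2.2; omega)] at this

end Necessity

section Construction

def vcol (x y : ℤ) (s : ℕ) : List (ℤ × ℤ) := (List.range s).map fun i : ℕ => (x, y + (i : ℤ))

def hrow (x y : ℤ) (s : ℕ) : List (ℤ × ℤ) := (List.range s).map fun i : ℕ => (x + (i : ℤ), y)

theorem length_vcol (x y : ℤ) (s : ℕ) : (vcol x y s).length = s := by simp [vcol]

theorem length_hrow (x y : ℤ) (s : ℕ) : (hrow x y s).length = s := by simp [hrow]

theorem vcol_zero (x y : ℤ) : vcol x y 0 = [] := rfl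

theorem isGridPath_vcol (x y : ℤ) (s : ℕ) :
    IsGridPath (Icc x x ×ˢ Icc y (y + s)) (vcol x y (s + 1)) (x, y) (x, y + s) := by
  refine ⟨by simp [vcol], ?_, ?_, ?_, by simp [vcol, List.range_succ_eq_map], by
    simp [vcol, List.range_succ]⟩
  · simp only [vcol, List.mem_map, List.mem_range]
    rintro _ ⟨i, hi, rfl⟩
    simp only [Set.mem_prod, Set.mem_Icc]
    omega
  · exact List.Nodup.map (fun i j h => by simpa using h) List.nodup_range
  · exact (List.isChain_map _).2 <| (List.isChain_range _ _).2 fun i _ => by simp [GridAdj]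

theorem isGridPath_hrow (x y : ℤ) (s : ℕ) :
    IsGridPath (Icc x (x + s) ×ˢ Icc y y) (hrow x y (s + 1)) (x, y) (x + s, y) := by
  refine ⟨by simp [hrow], ?_, ?_, ?_, by simp [hrow, List.range_succ_eq_map], by
    simp [hrow, List.range_succ]⟩
  · simp only [hrow, List.mem_map, List.mem_range]
    rintro _ ⟨i, hi, rfl⟩
    simp only [Set.mem_prod, Set.mem_Icc]
    omega
  · exact List.Nodup.map (fun i j h => by simpa using h) List.nodup_range
  · exact (List.isChain_map _).2 <| (List.isChain_range _ _).2 fun i _ => by simp [GridAdj]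

theorem isGridPath_square (x y : ℤ) :
    IsGridPath (Icc x (x + 1) ×ˢ Icc y (y + 1)) [(x, y), (x + 1, y), (x + 1, y + 1), (x, y + 1)]
      (x, y) (x, y + 1) := by
  refine ⟨by simp, ?_, ?_, ?_, rfl, rfl⟩
  · simp [Set.mem_Icc]
  · simp [Prod.ext_iff]
  · show List.IsChain GridAdj _
    simp [GridAdj]

def wiggle (x : ℤ) : ℤ → ℕ → ℕ → List (ℤ × ℤ)
  | y, 0, s => vcol x y s
  | y, b + 1, s => [(x, y), (x + 1, y), (x + 1, y + 1), (x, y + 1)] ++ wiggle x (y + 2) b s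

theorem length_wiggle (x y : ℤ) (b s : ℕ) : (wiggle x y b s).length = 4 * b + s := by
  induction b generalizing y with
  | zero => simp [wiggle, length_vcol]
  | succ b ih => simp only [wiggle, List.length_append, ih]; simp; ring

theorem isGridPath_wiggle (x y : ℤ) (b s : ℕ) (h : 0 < 2 * b + s) :
    IsGridPath (Icc x (x + min (b : ℤ) 1) ×ˢ Icc y (y + 2 * b + s - 1)) (wiggle x y b s)
      (x, y) (x, y + 2 * b + s - 1) := by
  induction b generalizing y with
  | zero =>
    obtain ⟨s, rfl⟩ := Nat.exists_eq_succ_of_ne_zero (by omega : s ≠ 0)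
    rw [wiggle, show y + 2 * ((0 : ℕ) : ℤ) + ((s + 1 : ℕ) : ℤ) - 1 = y + s by push_cast; ring]
    refine (isGridPath_vcol x y s).mono fun v hv => ?_
    simp only [Set.mem_prod, Set.mem_Icc] at hv ⊢; omega
  | succ b ih =>
    rw [wiggle, show y + 2 * ((b + 1 : ℕ) : ℤ) + s - 1 = y + 2 + 2 * b + s - 1 by push_cast; ring]
    rcases Nat.eq_zero_or_pos (2 * b + s) with hbs | hbs
    · obtain ⟨rfl, rfl⟩ : b = 0 ∧ s = 0 := by omega
      rw [wiggle, vcol_zero, List.append_nil,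
        show y + 2 + 2 * ((0 : ℕ) : ℤ) + ((0 : ℕ) : ℤ) - 1 = y + 1 by push_cast; ring]
      refine (isGridPath_square x y).mono fun v hv => ?_
      simp only [Set.mem_prod, Set.mem_Icc] at hv ⊢
      omega
    · refine ((isGridPath_square x y).append (ih (y + 2) hbs) (by simp [GridAdj])
        (Set.disjoint_left.2 fun v h₁ h₂ => ?_)).mono fun v hv => ?_
      · simp only [Set.mem_prod, Set.mem_Icc] at h₁ h₂; omega
      · simp only [Set.mem_union, Set.mem_prod, Set.mem_Icc] at hv ⊢; omega

def comb : ℤ → ℕ → List ℕ → List (ℤ × ℤ)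
  | x, c, [] => (vcol x 2 (c + 1)).reverse
  | x, c, d :: ds => (vcol x 2 (c + 1)).reverse ++ vcol (x - 1) 2 (d + 1) ++ comb (x - 2) d ds

theorem length_comb (x : ℤ) (c : ℕ) (ds : List ℕ) :
    (comb x c ds).length = c + 1 + 2 * ds.length + 2 * ds.sum := by
  induction ds generalizing x c with
  | nil => simp [comb, length_vcol]
  | cons d ds ih =>
    simp only [comb, List.length_append, List.length_reverse, length_vcol, ih]
    simp
    ring

theorem isGridPath_comb (x : ℤ) (c D : ℕ) (ds : List ℕ) (hc : c ≤ D) (hds : ∀ d ∈ ds, d ≤ D) :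
    IsGridPath (Icc (x - 2 * ds.length) x ×ˢ Icc 2 (2 + (D : ℤ))) (comb x c ds)
      (x, 2 + (c : ℤ)) (x - 2 * ds.length, 2) := by
  induction ds generalizing x c with
  | nil =>
    rw [comb, List.length_nil, Nat.cast_zero, mul_zero, sub_zero]
    refine (isGridPath_vcol x 2 c).reverse.mono fun v hv => ?_
    simp only [Set.mem_prod, Set.mem_Icc] at hv ⊢; omega
  | cons d ds ih =>
    have hd := hds d (by simp)
    rw [comb, show x - 2 * ((d :: ds).length : ℤ) = x - 2 - 2 * ds.length by simp; ring]
    refine ((((isGridPath_vcol x 2 c).reverse.append (isGridPath_vcol (x - 1) 2 d)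
      (by simp [GridAdj]) (Set.disjoint_left.2 fun v h₁ h₂ => ?_)).append
      (ih (x - 2) d hd fun d' hd' => hds d' (by simp [hd'])) (by simp [GridAdj])
      (Set.disjoint_left.2 fun v h₁ h₂ => ?_))).mono fun v hv => ?_
    · simp only [Set.mem_prod, Set.mem_Icc] at h₁ h₂; omega
    · simp only [Set.mem_union, Set.mem_prod, Set.mem_Icc] at h₁ h₂; omega
    · simp only [Set.mem_union, Set.mem_prod, Set.mem_Icc] at hv ⊢; omega

def combCycle (p b s c : ℕ) (ds : List ℕ) : List (ℤ × ℤ) :=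
  hrow 1 1 (2 * p + 1) ++ wiggle (2 * p + 2 : ℤ) 1 b s ++ comb (2 * p + 1 : ℤ) c ds

theorem length_combCycle (p b s c : ℕ) (ds : List ℕ) (hbs : 2 * b + s = c + 2)
    (hlen : ds.length = p) :
    (combCycle p b s c ds).length = 4 * p + 4 + 2 * b + 2 * c + 2 * ds.sum := by
  simp only [combCycle, List.length_append, length_hrow, length_wiggle, length_comb, hlen]
  omega

theorem isGridCycle_combCycle (p b s c D : ℕ) (ds : List ℕ) (hbs : 2 * b + s = c + 2)
    (hc : c ≤ D) (hds : ∀ d ∈ ds, d ≤ D) (hlen : ds.length = p) :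
    IsGridCycle (Icc 1 (2 * p + 2 + min (b : ℤ) 1) ×ˢ Icc 1 (2 + (D : ℤ)))
      (combCycle p b s c ds) := by
  have hpath := ((isGridPath_hrow 1 1 (2 * p)).append
    (isGridPath_wiggle (2 * p + 2 : ℤ) 1 b s (by omega)) (by unfold GridAdj; omega)
    (Set.disjoint_left.2 fun v h₁ h₂ => ?_)).append
    (isGridPath_comb (2 * p + 1 : ℤ) c D ds hc hds) (by unfold GridAdj; omega)
    (Set.disjoint_left.2 fun v h₁ h₂ => ?_)
  · refine (hpath.mono fun v hv => ?_).isGridCycle (by unfold GridAdj; omega) ?_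
    · simp only [Set.mem_union, Set.mem_prod, Set.mem_Icc] at hv ⊢; omega
    · show 3 ≤ (combCycle p b s c ds).length
      rw [length_combCycle p b s c ds hbs hlen]; omega
  · simp only [Set.mem_prod, Set.mem_Icc] at h₁ h₂; omega
  · simp only [Set.mem_union, Set.mem_prod, Set.mem_Icc] at h₁ h₂; omega

theorem exists_list_sum_eq {p D s : ℕ} (hs : s ≤ p * D) :
    ∃ ds : List ℕ, ds.length = p ∧ (∀ d ∈ ds, d ≤ D) ∧ ds.sum = s := by
  induction p generalizing s with
  | zero => exact ⟨[], rfl, by simp, by simp only [zero_mul, Nat.le_zero] at hs; simp [hs]⟩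
  | succ p ih =>
    obtain ⟨ds, hlen, hD, hsum⟩ := ih (s := s - min D s) (by rw [Nat.succ_mul] at hs; omega)
    refine ⟨min D s :: ds, by simp [hlen], ?_, by simp [hsum]⟩
    simpa using And.intro (min_le_left D s) hD

theorem exists_combCycle_params {M D r : ℕ} (hM : 2 ≤ M) (hr : 2 ≤ r)
    (hrM : 2 * r ≤ M * (D + 2)) :
    ∃ p b s c t : ℕ, 2 * p + 2 + min b 1 ≤ M ∧ 2 * b + s = c + 2 ∧ c ≤ D ∧ t ≤ p * D ∧
      r = 2 * p + 2 + b + c + t := by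
  rcases le_or_gt r M with hrM' | hMr
  · -- the `2 × r` rectangle
    exact ⟨r / 2 - 1, r % 2, 2 - 2 * (r % 2), 0, 0, by omega, by omega, by omega, by omega,
      by omega⟩
  · obtain ⟨p, e, he, rfl⟩ : ∃ p e, e ≤ 1 ∧ M = 2 * p + 2 + e :=
      ⟨M / 2 - 1, M % 2, by omega, by omega⟩
    have hprod : (2 * p + 2 + e) * (D + 2) = 2 * (p * D) + 2 * D + 4 * p + 4 + e * (D + 2) := by
      ring
    rw [hprod] at hrM
    obtain ⟨c, hc⟩ : ∃ c, c = min (r - (2 * p + 2)) D := ⟨_, rfl⟩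
    obtain ⟨t, ht⟩ : ∃ t, t = min (r - (2 * p + 2) - c) (p * D) := ⟨_, rfl⟩
    obtain ⟨b, hb⟩ : ∃ b, b = r - (2 * p + 2) - c - t := ⟨_, rfl⟩
    -- `b > 0` forces `c = D` and `t = p * D`, so `2r ≤ M (D + 2)` gives `e = 1` and `2b ≤ D + 2`
    refine ⟨p, b, c + 2 - 2 * b, c, t, ?_, ?_, by omega, by omega, by omega⟩ <;>
    · obtain rfl | rfl : e = 0 ∨ e = 1 := by omega
      all_goals simp only [zero_mul, add_zero, one_mul] at hrM; omega

theorem exists_isGridCycle_rectV {M N r : ℕ} (hM : 2 ≤ M) (hN : 2 ≤ N) (hr : 2 ≤ r)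
    (hrMN : 2 * r ≤ M * N) : ∃ l, IsGridCycle (RectV M N) l ∧ l.length = 2 * r := by
  obtain ⟨D, rfl⟩ : ∃ D, N = D + 2 := ⟨N - 2, by omega⟩
  obtain ⟨p, b, s, c, t, hpb, hbs, hc, ht, rfl⟩ := exists_combCycle_params hM hr hrMN
  obtain ⟨ds, hlen, hds, rfl⟩ := exists_list_sum_eq ht
  refine ⟨combCycle p b s c ds, (isGridCycle_combCycle p b s c D ds hbs hc hds hlen).mono
    fun v hv => ?_, by rw [length_combCycle p b s c ds hbs hlen]; ring⟩
  simp only [Set.mem_prod, Set.mem_Icc] at hv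
  exact ⟨hv.1.1, by omega, hv.2.1, by push_cast; omega⟩

end Construction

/-- The rectangular grid graph `R(m,n)` has a cycle with exactly `k`
vertices iff `m > 1`, `n > 1`, `k` is even and `4 ≤ k ≤ m·n`. -/
theorem cycle_of_length_k_in_rect (m n : ℤ) (k : ℕ) :
    (∃ l : List (ℤ × ℤ), IsGridCycle (RectV m n) l ∧ l.length = k) ↔
      (1 < m ∧ 1 < n ∧ Even k ∧ 4 ≤ k ∧ (k : ℤ) ≤ m * n) := by
  constructor
  · rintro ⟨l, hl, rfl⟩
    have hRect : ∀ v ∈ l, 1 ≤ v.1 ∧ v.1 ≤ m ∧ 1 ≤ v.2 ∧ v.2 ≤ n := hl.2.1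
    obtain ⟨j, hj⟩ := hl.even_length
    refine ⟨?_, ?_, ⟨j, hj⟩, by have := hl.1; omega, hl.length_le_rectV⟩
    · by_contra hm
      exact hl.not_forall_fst_eq 1 fun v hv => by have := hRect v hv; omega
    · by_contra hn
      exact hl.not_forall_snd_eq 1 fun v hv => by have := hRect v hv; omega
  · rintro ⟨hm, hn, ⟨r, rfl⟩, hk, hkmn⟩
    lift m to ℕ using by omega
    lift n to ℕ using by omega
    rw [← two_mul]
    exact exists_isGridCycle_rectV (by omega) (by omega) (by omega)
      (by rw [two_mul]; exact_mod_cast hkmn)
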